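/- arXiv:1412.0275 — 3 statements merged into one kernel-verified Lean document; each statement's English description precedes it below -/
import Mathlib

section
/- For every s ∈ (0,1] and all real numbers a, b with a ≥ b ≥ 0, one has (a+b)^{2s} + (a−b)^{2s} ≤ 2·a^{2s} + 2·b^{2s}. -/
/-! Write `x ^ (2s) = (x²) ^ s`. The squares `(a+b)²` and `(a-b)²` have midpoint `a² + b²`, so
concavity of `t ↦ t ^ s` bounds the left side by `2 (a² + b²) ^ s`, and subadditivity of
`t ↦ t ^ s` splits this into `2 a^(2s) + 2 b^(2s)`. -/

lemma Real.rpow_add_rpow_le_two_mul_rpow_midpoint {p x y : ℝ} (hx : 0 ≤ x) (hy : 0 ≤ y)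
    (hp₀ : 0 ≤ p) (hp₁ : p ≤ 1) : x ^ p + y ^ p ≤ 2 * ((x + y) / 2) ^ p := by
  have h := (Real.concaveOn_rpow hp₀ hp₁).2 (Set.mem_Ici.2 hx) (Set.mem_Ici.2 hy)
    (by norm_num : (0 : ℝ) ≤ 1 / 2) (by norm_num : (0 : ℝ) ≤ 1 / 2) (by norm_num)
  rw [smul_eq_mul, smul_eq_mul, smul_eq_mul, smul_eq_mul,
    show 1 / 2 * x + 1 / 2 * y = (x + y) / 2 by ring] at h
  linarith

/-- For every `s ∈ (0,1]` and all reals `a ≥ b ≥ 0`, one has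
`(a+b)^(2s) + (a-b)^(2s) ≤ 2 a^(2s) + 2 b^(2s)` (real powers). -/
theorem stmt_0 (s : ℝ) (hs : s ∈ Set.Ioc (0 : ℝ) 1) (a b : ℝ)
    (hb : 0 ≤ b) (hab : b ≤ a) :
    (a + b) ^ (2 * s) + (a - b) ^ (2 * s) ≤ 2 * a ^ (2 * s) + 2 * b ^ (2 * s) := by
  obtain ⟨hs₀, hs₁⟩ := hs
  have ha : 0 ≤ a := hb.trans hab
  have rpow_two_mul : ∀ x : ℝ, 0 ≤ x → x ^ (2 * s) = (x ^ 2) ^ s := fun x hx => by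
    rw [Real.rpow_mul hx, Real.rpow_two]
  rw [rpow_two_mul _ (by linarith), rpow_two_mul _ (by linarith), rpow_two_mul _ ha,
    rpow_two_mul _ hb]
  calc ((a + b) ^ 2) ^ s + ((a - b) ^ 2) ^ s
      ≤ 2 * (((a + b) ^ 2 + (a - b) ^ 2) / 2) ^ s :=
        Real.rpow_add_rpow_le_two_mul_rpow_midpoint (sq_nonneg _) (sq_nonneg _) hs₀.le hs₁
    _ = 2 * (a ^ 2 + b ^ 2) ^ s := by ring_nf
    _ ≤ 2 * ((a ^ 2) ^ s + (b ^ 2) ^ s) := by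
        gcongr
        exact Real.rpow_add_le_add_rpow (sq_nonneg a) (sq_nonneg b) hs₀.le hs₁
    _ = 2 * (a ^ 2) ^ s + 2 * (b ^ 2) ^ s := mul_add _ _ _
end

section
/- There exists a constant c₂ > 0, depending only on n, s and C, such that for every x ∈ ℝⁿ with x ≠ 0 one has V(x) ≤ c₂·|x|^{2s−n}; in particular V(x) < ∞ for x ≠ 0. -/
/-!
Write `α = 2s` and `d = n`. The scaling relation `p(x,t) = t^(-d/α) p(t^(-1/α) x, 1)` turns the
profile bound `p(y,1) ≤ C / (1 + |y|^(d+α))` into two bounds on `p(x,t)`: `C t^(-d/α)` (from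
`p(y,1) ≤ C`) and `C t / |x|^(d+α)` (from `p(y,1) ≤ C / |y|^(d+α)`). Integrating the second over
`(0, |x|^α]` and the first, integrable at infinity since `d > α`, over `(|x|^α, ∞)` gives
`V(x) ≤ (C/2 + C α/(d-α)) |x|^(α-d)`.
-/

open MeasureTheory Set
open scoped ENNReal

lemma lintegral_Ioc_zero_ofReal_const_mul {c A : ℝ} (hc : 0 ≤ c) (hA : 0 ≤ A) :
    ∫⁻ t in Ioc 0 A, ENNReal.ofReal (c * t) = ENNReal.ofReal (c * (A ^ 2 / 2)) := by
  rw [← ofReal_integral_eq_lintegral_ofReal, integral_const_mul,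
    ← intervalIntegral.integral_of_le hA, integral_id]
  · ring_nf
  · exact (continuous_const.mul continuous_id).integrableOn_Ioc
  · filter_upwards [ae_restrict_mem measurableSet_Ioc] with t ht
    exact mul_nonneg hc ht.1.le

lemma lintegral_Ioi_ofReal_const_mul_rpow {c A e : ℝ} (hc : 0 ≤ c) (he : e < -1) (hA : 0 < A) :
    ∫⁻ t in Ioi A, ENNReal.ofReal (c * t ^ e) = ENNReal.ofReal (c * (-A ^ (e + 1) / (e + 1))) := by
  rw [← ofReal_integral_eq_lintegral_ofReal, integral_const_mul, integral_Ioi_rpow_of_lt he hA]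
  · exact (integrableOn_Ioi_rpow_of_lt he hA).const_mul _
  · filter_upwards [ae_restrict_mem measurableSet_Ioi] with t ht
    exact mul_nonneg hc (Real.rpow_nonneg (hA.trans ht).le _)

section Scaling

variable {E : Type*} [NormedAddCommGroup E] [NormedSpace ℝ E] {p : E → ℝ → ℝ≥0∞} {d α C : ℝ}

lemma le_ofReal_const_mul_rpow_of_scaling (hC : 0 ≤ C)
    (hscal : ∀ x t, 0 < t → p x t = ENNReal.ofReal (t ^ (-(d / α))) * p (t ^ (-(1 / α)) • x) 1)
    (hbound : ∀ x : E, p x 1 ≤ ENNReal.ofReal (C / (1 + ‖x‖ ^ (d + α))))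
    (x : E) {t : ℝ} (ht : 0 < t) :
    p x t ≤ ENNReal.ofReal (C * t ^ (-(d / α))) := by
  have hprofile : C / (1 + ‖t ^ (-(1 / α)) • x‖ ^ (d + α)) ≤ C :=
    div_le_self hC (le_add_of_nonneg_right (by positivity))
  calc p x t ≤ ENNReal.ofReal (t ^ (-(d / α))) * ENNReal.ofReal C := by
        rw [hscal x t ht]
        exact mul_le_mul_right ((hbound _).trans (ENNReal.ofReal_le_ofReal hprofile)) _
    _ = ENNReal.ofReal (C * t ^ (-(d / α))) := by
        rw [← ENNReal.ofReal_mul (by positivity), mul_comm]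

lemma le_ofReal_const_mul_of_scaling (hα : 0 < α) (hC : 0 ≤ C)
    (hscal : ∀ x t, 0 < t → p x t = ENNReal.ofReal (t ^ (-(d / α))) * p (t ^ (-(1 / α)) • x) 1)
    (hbound : ∀ x : E, p x 1 ≤ ENNReal.ofReal (C / (1 + ‖x‖ ^ (d + α))))
    {x : E} (hx : x ≠ 0) {t : ℝ} (ht : 0 < t) :
    p x t ≤ ENNReal.ofReal (C / ‖x‖ ^ (d + α) * t) := by
  have hxpos : 0 < ‖x‖ := norm_pos_iff.mpr hx
  have hnorm : ‖t ^ (-(1 / α)) • x‖ ^ (d + α) = t ^ (-(d / α)) / t * ‖x‖ ^ (d + α) := by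
    rw [norm_smul, Real.norm_of_nonneg (by positivity), Real.mul_rpow (by positivity) hxpos.le,
      ← Real.rpow_mul ht.le, ← Real.rpow_sub_one ht.ne']
    congr 2
    field_simp
    ring
  have hprofile : t ^ (-(d / α)) * (C / (1 + ‖t ^ (-(1 / α)) • x‖ ^ (d + α)))
      ≤ C / ‖x‖ ^ (d + α) * t := by
    calc t ^ (-(d / α)) * (C / (1 + ‖t ^ (-(1 / α)) • x‖ ^ (d + α)))
        ≤ t ^ (-(d / α)) * (C / ‖t ^ (-(1 / α)) • x‖ ^ (d + α)) := by
          gcongr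
          · rw [hnorm]; positivity
          · linarith
      _ = C / ‖x‖ ^ (d + α) * t := by
          rw [hnorm]
          have : 0 < t ^ (-(d / α)) := by positivity
          field_simp
  calc p x t ≤ ENNReal.ofReal (t ^ (-(d / α))) * ENNReal.ofReal
        (C / (1 + ‖t ^ (-(1 / α)) • x‖ ^ (d + α))) := by
        rw [hscal x t ht]
        exact mul_le_mul_right (hbound _) _
    _ ≤ ENNReal.ofReal (C / ‖x‖ ^ (d + α) * t) := by
        rw [← ENNReal.ofReal_mul (by positivity)]
        exact ENNReal.ofReal_le_ofReal hprofile

lemma lintegral_Ioi_zero_le_of_scaling (hα : 0 < α) (hαd : α < d) (hC : 0 ≤ C)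
    (hscal : ∀ x t, 0 < t → p x t = ENNReal.ofReal (t ^ (-(d / α))) * p (t ^ (-(1 / α)) • x) 1)
    (hbound : ∀ x : E, p x 1 ≤ ENNReal.ofReal (C / (1 + ‖x‖ ^ (d + α))))
    {x : E} (hx : x ≠ 0) :
    ∫⁻ t in Ioi 0, p x t ≤ ENNReal.ofReal ((C / 2 + C * α / (d - α)) * ‖x‖ ^ (α - d)) := by
  have ha : 0 < ‖x‖ := norm_pos_iff.mpr hx
  set a := ‖x‖
  have hA : 0 < a ^ α := by positivity
  have hdα : 0 < d - α := by linarith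
  have he : -(d / α) < -1 := by rw [neg_lt_neg_iff, one_lt_div hα]; exact hαd
  have hsmall : ∫⁻ t in Ioc 0 (a ^ α), p x t ≤ ENNReal.ofReal (C / 2 * a ^ (α - d)) := calc
    _ ≤ ∫⁻ t in Ioc 0 (a ^ α), ENNReal.ofReal (C / a ^ (d + α) * t) :=
        setLIntegral_mono' measurableSet_Ioc fun t ht =>
          le_ofReal_const_mul_of_scaling hα hC hscal hbound hx ht.1
    _ = ENNReal.ofReal (C / a ^ (d + α) * ((a ^ α) ^ 2 / 2)) :=
        lintegral_Ioc_zero_ofReal_const_mul (by positivity) hA.le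
    _ = ENNReal.ofReal (C / 2 * a ^ (α - d)) := by
        have hpow : a ^ (α - d) * a ^ (d + α) = (a ^ α) ^ 2 := by
          rw [← Real.rpow_add ha, ← Real.rpow_natCast, ← Real.rpow_mul ha.le]
          ring_nf
        congr 1
        field_simp
        linear_combination -C * hpow
  have hlarge : ∫⁻ t in Ioi (a ^ α), p x t ≤ ENNReal.ofReal (C * α / (d - α) * a ^ (α - d)) := calc
    _ ≤ ∫⁻ t in Ioi (a ^ α), ENNReal.ofReal (C * t ^ (-(d / α))) :=
        setLIntegral_mono' measurableSet_Ioi fun t ht =>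
          le_ofReal_const_mul_rpow_of_scaling hC hscal hbound x (hA.trans ht)
    _ = ENNReal.ofReal (C * (-(a ^ α) ^ (-(d / α) + 1) / (-(d / α) + 1))) :=
        lintegral_Ioi_ofReal_const_mul_rpow hC he hA
    _ = ENNReal.ofReal (C * α / (d - α) * a ^ (α - d)) := by
        have hexp : -(d / α) + 1 = (α - d) / α := by field_simp; ring
        rw [hexp, ← Real.rpow_mul ha.le, mul_div_cancel₀ _ hα.ne']
        have hαd' : α - d ≠ 0 := by linarith
        congr 1
        field_simp
        ring
  rw [← Ioc_union_Ioi_eq_Ioi hA.le, lintegral_union measurableSet_Ioi (Ioc_disjoint_Ioi le_rfl)]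
  calc _ ≤ ENNReal.ofReal (C / 2 * a ^ (α - d)) + ENNReal.ofReal (C * α / (d - α) * a ^ (α - d)) :=
        add_le_add hsmall hlarge
    _ = _ := by rw [← ENNReal.ofReal_add (by positivity) (by positivity), add_mul]

end Scaling

theorem stmt_8_general (n : ℕ) (s : ℝ) (hs : 0 < s) (hns : 2 * s < n)
    (C : ℝ) (hC : 0 < C)
    (p : EuclideanSpace ℝ (Fin n) → ℝ → ℝ≥0∞)
    (hscal : ∀ x : EuclideanSpace ℝ (Fin n), ∀ t : ℝ, 0 < t →
      p x t = ENNReal.ofReal (t ^ (-((n : ℝ) / (2 * s)))) * p ((t ^ (-(1 / (2 * s)))) • x) 1)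
    (hbound : ∀ x : EuclideanSpace ℝ (Fin n),
      p x 1 ≤ ENNReal.ofReal (C / (1 + ‖x‖ ^ ((n : ℝ) + 2 * s))))
    (V : EuclideanSpace ℝ (Fin n) → ℝ≥0∞)
    (hV : ∀ x, V x = ∫⁻ t in Set.Ioi (0 : ℝ), p x t) :
    ∃ c₂ : ℝ, 0 < c₂ ∧ ∀ x : EuclideanSpace ℝ (Fin n), x ≠ 0 →
      V x ≤ ENNReal.ofReal (c₂ * ‖x‖ ^ (2 * s - n)) ∧ V x < ⊤ := by
  have h2s : 0 < 2 * s := by linarith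
  have hn2s : 0 < (n : ℝ) - 2 * s := by linarith
  refine ⟨C / 2 + C * (2 * s) / (n - 2 * s), by positivity, fun x hx => ?_⟩
  have hVx := hV x ▸ lintegral_Ioi_zero_le_of_scaling h2s hns hC.le hscal hbound hx
  exact ⟨hVx, hVx.trans_lt ENNReal.ofReal_lt_top⟩

/-- Let `n > 2s > 0`, `C > 0`, and let `p : ℝⁿ × (0,∞) → [0,∞]` be measurable with the
stable scaling property and the bound `p(x,1) ≤ C/(1+|x|^{n+2s})`.  Then there is
`c₂ > 0`, depending only on `n`, `s` and `C`, such that the potential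
`V(x) = ∫₀^∞ p(x,t) dt` satisfies `V(x) ≤ c₂ |x|^{2s-n}` (in particular `V(x) < ∞`)
for every `x ≠ 0`. -/
theorem stmt_8 (n : ℕ) (hn : 1 ≤ n) (s : ℝ) (hs : 0 < s) (hns : 2 * s < n)
    (C : ℝ) (hC : 0 < C)
    (p : EuclideanSpace ℝ (Fin n) → ℝ → ℝ≥0∞)
    (hp : Measurable (Function.uncurry p))
    (hscal : ∀ x : EuclideanSpace ℝ (Fin n), ∀ t : ℝ, 0 < t →
      p x t = ENNReal.ofReal (t ^ (-((n : ℝ) / (2 * s)))) * p ((t ^ (-(1 / (2 * s)))) • x) 1)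
    (hbound : ∀ x : EuclideanSpace ℝ (Fin n),
      p x 1 ≤ ENNReal.ofReal (C / (1 + ‖x‖ ^ ((n : ℝ) + 2 * s))))
    (V : EuclideanSpace ℝ (Fin n) → ℝ≥0∞)
    (hV : ∀ x, V x = ∫⁻ t in Set.Ioi (0 : ℝ), p x t) :
    ∃ c₂ : ℝ, 0 < c₂ ∧ ∀ x : EuclideanSpace ℝ (Fin n), x ≠ 0 →
      V x ≤ ENNReal.ofReal (c₂ * ‖x‖ ^ (2 * s - n)) ∧ V x < ⊤ :=
  stmt_8_general n s hs hns C hC p hscal hbound V hV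
end

section
/- Let Ω ⊂ ℝⁿ be a bounded measurable set and let g ∈ L^{n/(2s)}(Ω), extended by zero to ℝⁿ. Then for every q ∈ [1,∞) there exists a constant C, depending only on n, s, q, Ω and c₂, such that the function u(x) = ∫_Ω g(y)·V(x−y) dy satisfies ‖u‖_{L^q(Ω)} ≤ C·‖g‖_{L^{n/(2s)}(Ω)}. -/
/-!
For `x, y ∈ Ω` the kernel is only evaluated on the ball `B` of radius `diam Ω`, where
`V ≤ c₂ |z|^(2s-n)` puts `V` in `L^r(B)` for every `r < n / (n - 2s)`. Young's inequality with
`1/p + 1/r = 1 + 1/Q`, `p = n/(2s)` and `Q = max q p` bounds `‖u‖_{L^Q(Ω)}` by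
`‖V‖_{L^r(B)} ‖g‖_{L^p(Ω)}`, and Hölder's inequality on the finite measure space `Ω` lowers `Q`
to `q`. Young's inequality itself is Tonelli plus Hölder's inequality with three factors, applied
to `k g = (k^r g^p)^(1/Q) (k^r)^(1-1/p) (g^p)^(1/p-1/Q)`.
-/

open MeasureTheory Metric TopologicalSpace
open scoped ENNReal

namespace ENNReal

theorem mul_eq_rpow_mul_rpow_mul_rpow {a b : ℝ≥0∞} {p r x y z : ℝ} (hp : 0 ≤ p) (hr : 0 ≤ r)
    (hx : 0 ≤ x) (hy : 0 ≤ y) (hz : 0 ≤ z) (hrxy : r * (x + y) = 1) (hpxz : p * (x + z) = 1) :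
    a * b = (a ^ r * b ^ p) ^ x * (a ^ r) ^ y * (b ^ p) ^ z := by
  calc a * b = a ^ (r * x + r * y) * b ^ (p * x + p * z) := by
        rw [← mul_add, ← mul_add, hrxy, hpxz, rpow_one, rpow_one]
    _ = _ := by
        rw [rpow_add_of_nonneg _ _ (mul_nonneg hr hx) (mul_nonneg hr hy),
          rpow_add_of_nonneg _ _ (mul_nonneg hp hx) (mul_nonneg hp hz), mul_rpow_of_nonneg _ _ hx,
          rpow_mul, rpow_mul, rpow_mul, rpow_mul]
        ring

end ENNReal

section Young

variable {α : Type*} [MeasurableSpace α] {μ : Measure α} {p r Q : ℝ}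

theorem inv_pos_of_young_exponents (hp : 1 ≤ p) (hpQ : p ≤ Q) (hpr : p⁻¹ + r⁻¹ = 1 + Q⁻¹) :
    0 < r⁻¹ := by
  have : p⁻¹ ≤ 1 := inv_le_one_of_one_le₀ hp
  have : 0 < Q⁻¹ := inv_pos.2 (by linarith)
  linarith

theorem mul_one_sub_inv_mul_lt_of_young_exponents {d : ℝ} (hd : 0 < d) (hp : 1 ≤ p)
    (hpQ : p ≤ Q) (hpr : p⁻¹ + r⁻¹ = 1 + Q⁻¹) : d * (1 - p⁻¹) * r < d := by
  have hr : 0 < r := inv_pos.1 (inv_pos_of_young_exponents hp hpQ hpr)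
  have hQ : 0 < Q⁻¹ := inv_pos.2 (by linarith)
  calc d * (1 - p⁻¹) * r < d * r⁻¹ * r := by gcongr; linarith
    _ = d := inv_mul_cancel_right₀ hr.ne' d

theorem lintegral_mul_rpow_le_of_young_exponents {f G : α → ℝ≥0∞} (hf : AEMeasurable f μ)
    (hG : AEMeasurable G μ) (hp : 1 ≤ p) (hpQ : p ≤ Q) (hpr : p⁻¹ + r⁻¹ = 1 + Q⁻¹) :
    (∫⁻ y, f y * G y ∂μ) ^ Q ≤ (∫⁻ y, f y ^ r * G y ^ p ∂μ)
      * ((∫⁻ y, f y ^ r ∂μ) ^ (Q * (1 - p⁻¹)) * (∫⁻ y, G y ^ p ∂μ) ^ (Q * (p⁻¹ - Q⁻¹))) := by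
  have hr : 0 < r := inv_pos.1 (inv_pos_of_young_exponents hp hpQ hpr)
  have hp0 : 0 < p := by linarith
  have hQ0 : 0 < Q := by linarith
  have h1 : 0 ≤ Q⁻¹ := by positivity
  have h2 : 0 ≤ 1 - p⁻¹ := sub_nonneg.2 (inv_le_one_of_one_le₀ hp)
  have h3 : 0 ≤ p⁻¹ - Q⁻¹ := sub_nonneg.2 (inv_anti₀ hp0 hpQ)
  have hsplit : ∀ y, f y * G y
      = (f y ^ r * G y ^ p) ^ Q⁻¹ * (f y ^ r) ^ (1 - p⁻¹) * (G y ^ p) ^ (p⁻¹ - Q⁻¹) :=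
    fun y => ENNReal.mul_eq_rpow_mul_rpow_mul_rpow hp0.le hr.le h1 h2 h3
      (by rw [show Q⁻¹ + (1 - p⁻¹) = r⁻¹ by linarith, mul_inv_cancel₀ hr.ne'])
      (by rw [add_sub_cancel, mul_inv_cancel₀ hp0.ne'])
  have hholder := ENNReal.lintegral_prod_norm_pow_le (μ := μ) Finset.univ
    (f := ![fun y => f y ^ r * G y ^ p, fun y => f y ^ r, fun y => G y ^ p])
    (p := ![Q⁻¹, 1 - p⁻¹, p⁻¹ - Q⁻¹])
    (by intro i _; fin_cases i <;> simp <;> fun_prop)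
    (by simp [Fin.sum_univ_three]; ring) (by intro i _; fin_cases i <;> simp [h1, h2, h3])
  simp only [Fin.prod_univ_three, Fin.isValue, Matrix.cons_val, ← hsplit] at hholder
  calc (∫⁻ y, f y * G y ∂μ) ^ Q
      ≤ ((∫⁻ y, f y ^ r * G y ^ p ∂μ) ^ Q⁻¹ * (∫⁻ y, f y ^ r ∂μ) ^ (1 - p⁻¹)
          * (∫⁻ y, G y ^ p ∂μ) ^ (p⁻¹ - Q⁻¹)) ^ Q := by gcongr
    _ = _ := by
        rw [ENNReal.mul_rpow_of_nonneg _ _ hQ0.le, ENNReal.mul_rpow_of_nonneg _ _ hQ0.le,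
          ← ENNReal.rpow_mul, ← ENNReal.rpow_mul, ← ENNReal.rpow_mul,
          inv_mul_cancel₀ hQ0.ne', ENNReal.rpow_one, mul_comm (1 - p⁻¹),
          mul_comm (p⁻¹ - Q⁻¹), mul_assoc]

theorem lintegral_rpow_lintegral_mul_le [SFinite μ] {k : α → α → ℝ≥0∞}
    (hk : Measurable (Function.uncurry k)) {G : α → ℝ≥0∞} (hG : AEMeasurable G μ)
    (hp : 1 ≤ p) (hpQ : p ≤ Q) (hpr : p⁻¹ + r⁻¹ = 1 + Q⁻¹) {A : ℝ≥0∞}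
    (hrow : ∀ᵐ x ∂μ, ∫⁻ y, k x y ^ r ∂μ ≤ A) (hcol : ∀ᵐ y ∂μ, ∫⁻ x, k x y ^ r ∂μ ≤ A) :
    ∫⁻ x, (∫⁻ y, k x y * G y ∂μ) ^ Q ∂μ ≤ A ^ (Q / r) * (∫⁻ y, G y ^ p ∂μ) ^ (Q / p) := by
  have hp0 : 0 < p := by linarith
  have hQ0 : 0 < Q := by linarith
  have hp1 : 0 ≤ 1 - p⁻¹ := sub_nonneg.2 (inv_le_one_of_one_le₀ hp)
  have hpQ' : 0 ≤ p⁻¹ - Q⁻¹ := sub_nonneg.2 (inv_anti₀ hp0 hpQ)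
  set B := ∫⁻ y, G y ^ p ∂μ
  set I := fun x => ∫⁻ y, k x y ^ r * G y ^ p ∂μ
  have hkG : AEMeasurable (Function.uncurry fun x y => k x y ^ r * G y ^ p) (μ.prod μ) :=
    (hk.pow_const r).aemeasurable.mul (hG.pow_const p).comp_snd
  have hpointwise : ∀ᵐ x ∂μ,
      (∫⁻ y, k x y * G y ∂μ) ^ Q ≤ I x * (A ^ (Q * (1 - p⁻¹)) * B ^ (Q * (p⁻¹ - Q⁻¹))) := by
    filter_upwards [hrow] with x hx
    calc (∫⁻ y, k x y * G y ∂μ) ^ Q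
        ≤ I x * ((∫⁻ y, k x y ^ r ∂μ) ^ (Q * (1 - p⁻¹)) * B ^ (Q * (p⁻¹ - Q⁻¹))) :=
          lintegral_mul_rpow_le_of_young_exponents hk.of_uncurry_left.aemeasurable hG hp hpQ hpr
      _ ≤ I x * (A ^ (Q * (1 - p⁻¹)) * B ^ (Q * (p⁻¹ - Q⁻¹))) := by gcongr
  have hI : ∫⁻ x, I x ∂μ ≤ A * B := by
    rw [lintegral_lintegral_swap hkG]
    calc ∫⁻ y, ∫⁻ x, k x y ^ r * G y ^ p ∂μ ∂μ = ∫⁻ y, (∫⁻ x, k x y ^ r ∂μ) * G y ^ p ∂μ :=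
          lintegral_congr fun y => lintegral_mul_const _ (hk.of_uncurry_right.pow_const r)
      _ ≤ ∫⁻ y, A * G y ^ p ∂μ := lintegral_mono_ae (hcol.mono fun y hy => by gcongr)
      _ = A * B := lintegral_const_mul'' _ (hG.pow_const p)
  have hQQ : Q * Q⁻¹ = 1 := mul_inv_cancel₀ hQ0.ne'
  calc ∫⁻ x, (∫⁻ y, k x y * G y ∂μ) ^ Q ∂μ
      ≤ ∫⁻ x, I x * (A ^ (Q * (1 - p⁻¹)) * B ^ (Q * (p⁻¹ - Q⁻¹))) ∂μ :=
        lintegral_mono_ae hpointwise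
    _ = (∫⁻ x, I x ∂μ) * (A ^ (Q * (1 - p⁻¹)) * B ^ (Q * (p⁻¹ - Q⁻¹))) :=
        lintegral_mul_const'' _ hkG.lintegral_prod_right
    _ ≤ A * B * (A ^ (Q * (1 - p⁻¹)) * B ^ (Q * (p⁻¹ - Q⁻¹))) := by gcongr
    _ = A ^ (Q / r) * B ^ (Q / p) := by
        rw [show Q / r = 1 + Q * (1 - p⁻¹) by linear_combination Q * hpr + hQQ,
          show Q / p = 1 + Q * (p⁻¹ - Q⁻¹) by linear_combination hQQ,
          ENNReal.rpow_add_of_nonneg _ _ zero_le_one (by positivity),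
          ENNReal.rpow_add_of_nonneg _ _ zero_le_one (by positivity),
          ENNReal.rpow_one, ENNReal.rpow_one]
        ring

theorem eLpNorm_lintegral_mul_le [SFinite μ] {k : α → α → ℝ≥0∞}
    (hk : Measurable (Function.uncurry k)) {G : α → ℝ≥0∞} (hG : AEMeasurable G μ)
    (hp : 1 ≤ p) (hpQ : p ≤ Q) (hpr : p⁻¹ + r⁻¹ = 1 + Q⁻¹) {A : ℝ≥0∞}
    (hrow : ∀ᵐ x ∂μ, ∫⁻ y, k x y ^ r ∂μ ≤ A) (hcol : ∀ᵐ y ∂μ, ∫⁻ x, k x y ^ r ∂μ ≤ A) :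
    eLpNorm (fun x => ∫⁻ y, k x y * G y ∂μ) (ENNReal.ofReal Q) μ
      ≤ A ^ r⁻¹ * eLpNorm G (ENNReal.ofReal p) μ := by
  have hp0 : 0 < p := by linarith
  have hQ0 : 0 < Q := by linarith
  rw [eLpNorm_eq_lintegral_rpow_enorm_toReal (by simpa) ENNReal.ofReal_ne_top,
    eLpNorm_eq_lintegral_rpow_enorm_toReal (by simpa) ENNReal.ofReal_ne_top,
    ENNReal.toReal_ofReal hQ0.le, ENNReal.toReal_ofReal hp0.le]
  simp only [enorm_eq_self]
  calc (∫⁻ x, (∫⁻ y, k x y * G y ∂μ) ^ Q ∂μ) ^ (1 / Q)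
      ≤ (A ^ (Q / r) * (∫⁻ y, G y ^ p ∂μ) ^ (Q / p)) ^ (1 / Q) := by
        gcongr
        exact lintegral_rpow_lintegral_mul_le hk hG hp hpQ hpr hrow hcol
    _ = A ^ r⁻¹ * (∫⁻ y, G y ^ p ∂μ) ^ (1 / p) := by
        rw [ENNReal.mul_rpow_of_nonneg _ _ (by positivity), ← ENNReal.rpow_mul,
          ← ENNReal.rpow_mul]
        congr 2 <;> field_simp

end Young

section BoundedDomain

variable {E : Type*} [NormedAddCommGroup E] [MeasurableSpace E] [BorelSpace E]
  {μ : Measure E} {f : E → ℝ≥0∞} {Ω : Set E} {x : E}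

theorem setLIntegral_comp_sub_left_le [μ.IsAddLeftInvariant] [μ.IsNegInvariant]
    (hf : Measurable f) (hΩ : Bornology.IsBounded Ω) (hx : x ∈ Ω) :
    ∫⁻ y in Ω, f (x - y) ∂μ ≤ ∫⁻ z in closedBall 0 (diam Ω), f z ∂μ :=
  calc ∫⁻ y in Ω, f (x - y) ∂μ ≤ ∫⁻ y in (x - ·) ⁻¹' closedBall 0 (diam Ω), f (x - y) ∂μ :=
        lintegral_mono_set fun y hy => by
          simpa [dist_eq_norm] using dist_le_diam_of_mem hΩ hx hy
    _ = ∫⁻ z in closedBall 0 (diam Ω), f z ∂μ :=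
        (Measure.measurePreserving_sub_left μ x).setLIntegral_comp_preimage
          measurableSet_closedBall hf

theorem setLIntegral_comp_sub_right_le [μ.IsAddRightInvariant] (hf : Measurable f)
    (hΩ : Bornology.IsBounded Ω) (hx : x ∈ Ω) :
    ∫⁻ y in Ω, f (y - x) ∂μ ≤ ∫⁻ z in closedBall 0 (diam Ω), f z ∂μ :=
  calc ∫⁻ y in Ω, f (y - x) ∂μ ≤ ∫⁻ y in (· - x) ⁻¹' closedBall 0 (diam Ω), f (y - x) ∂μ :=
        lintegral_mono_set fun y hy => by
          simpa [dist_eq_norm] using dist_le_diam_of_mem hΩ hy hx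
    _ = ∫⁻ z in closedBall 0 (diam Ω), f z ∂μ :=
        (measurePreserving_sub_right μ x).setLIntegral_comp_preimage measurableSet_closedBall hf

theorem eLpNorm_setIntegral_mul_sub_le [SecondCountableTopology E] [μ.IsAddLeftInvariant]
    [μ.IsNegInvariant] [SFinite μ]
    {V : E → ℝ} (hV : Measurable V) (hΩb : Bornology.IsBounded Ω) (hΩm : MeasurableSet Ω)
    {q p r Q : ℝ} (hq : 0 ≤ q) (hqQ : q ≤ Q) (hp : 1 ≤ p) (hpQ : p ≤ Q)
    (hpr : p⁻¹ + r⁻¹ = 1 + Q⁻¹) {g : E → ℝ} (hg : AEStronglyMeasurable g (μ.restrict Ω)) :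
    eLpNorm (fun x => ∫ y in Ω, g y * V (x - y) ∂μ) (ENNReal.ofReal q) (μ.restrict Ω)
      ≤ (∫⁻ z in closedBall 0 (diam Ω), ‖V z‖ₑ ^ r ∂μ) ^ r⁻¹ * μ Ω ^ (1 / q - 1 / Q)
        * eLpNorm g (ENNReal.ofReal p) (μ.restrict Ω) := by
  have hK : Measurable fun z => ‖V z‖ₑ ^ r := hV.enorm.pow_const r
  have hk : Measurable (Function.uncurry fun x y : E => ‖V (x - y)‖ₑ) := by fun_prop
  set U := fun x => ∫⁻ y in Ω, ‖V (x - y)‖ₑ * ‖g y‖ₑ ∂μ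
  have hU : eLpNorm U (ENNReal.ofReal Q) (μ.restrict Ω)
      ≤ (∫⁻ z in closedBall 0 (diam Ω), ‖V z‖ₑ ^ r ∂μ) ^ r⁻¹
        * eLpNorm g (ENNReal.ofReal p) (μ.restrict Ω) := by
    simpa [eLpNorm_enorm] using eLpNorm_lintegral_mul_le hk hg.enorm hp hpQ hpr
      (by filter_upwards [ae_restrict_mem hΩm] with x hx using
        setLIntegral_comp_sub_left_le hK hΩb hx)
      (by filter_upwards [ae_restrict_mem hΩm] with x hx using
        setLIntegral_comp_sub_right_le hK hΩb hx)
  have hUm : AEStronglyMeasurable U (μ.restrict Ω) :=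
    (hk.aemeasurable.mul hg.enorm.comp_snd).lintegral_prod_right.aestronglyMeasurable
  calc eLpNorm (fun x => ∫ y in Ω, g y * V (x - y) ∂μ) (ENNReal.ofReal q) (μ.restrict Ω)
      ≤ eLpNorm U (ENNReal.ofReal q) (μ.restrict Ω) := by
        refine eLpNorm_mono_enorm fun x => (enorm_integral_le_lintegral_enorm _).trans_eq ?_
        rw [enorm_eq_self]
        exact lintegral_congr fun y => by rw [enorm_mul, mul_comm]
    _ ≤ eLpNorm U (ENNReal.ofReal Q) (μ.restrict Ω) * μ Ω ^ (1 / q - 1 / Q) := by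
        have := eLpNorm_le_eLpNorm_mul_rpow_measure_univ (ENNReal.ofReal_le_ofReal hqQ) hUm
        rwa [ENNReal.toReal_ofReal hq, ENNReal.toReal_ofReal (hq.trans hqQ),
          Measure.restrict_apply_univ] at this
    _ ≤ _ := by
        rw [mul_right_comm]
        gcongr

end BoundedDomain

theorem locallyIntegrable_norm_rpow_of_norm_le_rpow {E F : Type*} [NormedAddCommGroup E]
    [NormedSpace ℝ E] [FiniteDimensional ℝ E] [MeasurableSpace E] [BorelSpace E]
    [NormedAddCommGroup F] {μ : Measure E} [μ.IsAddHaarMeasure] (hd : 1 ≤ Module.finrank ℝ E)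
    {V : E → F} (hVm : AEStronglyMeasurable V μ) {c a r : ℝ} (hc : 0 ≤ c) (hr : 0 ≤ r)
    (hV : ∀ z ≠ 0, ‖V z‖ ≤ c * ‖z‖ ^ (-a)) (har : a * r < Module.finrank ℝ E) :
    LocallyIntegrable (fun z => ‖V z‖ ^ r) μ := by
  have : Nontrivial E := Module.nontrivial_of_finrank_pos (R := ℝ) (by omega)
  refine locallyIntegrable_of_norm_le_rpow hd har (C := c ^ r) ?_
    (hVm.norm.aemeasurable.pow_const r).aestronglyMeasurable
  filter_upwards [compl_mem_ae_iff.2 (measure_singleton (μ := μ) 0)] with z hz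
  calc ‖‖V z‖ ^ r‖ = ‖V z‖ ^ r := Real.norm_of_nonneg (by positivity)
    _ ≤ (c * ‖z‖ ^ (-a)) ^ r := Real.rpow_le_rpow (norm_nonneg _) (hV z hz) hr
    _ = c ^ r * ‖z‖ ^ (-(a * r)) := by
        rw [Real.mul_rpow hc (by positivity), ← Real.rpow_mul (norm_nonneg z), neg_mul]

/-- Let `n > 2s`, `s ∈ (0,1)`, and let `V : ℝⁿ → ℝ` be measurable with
`0 ≤ V(z) ≤ c₂ |z|^{2s-n}` for `z ≠ 0`.  Let `Ω ⊆ ℝⁿ` be bounded and measurable and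
`g ∈ L^{n/(2s)}(Ω)` extended by zero.  Then for every `q ∈ [1,∞)` there is `C`,
depending only on `n`, `s`, `q`, `Ω`, `c₂`, such that `u(x) = ∫_Ω g(y) V(x-y) dy`
satisfies `‖u‖_{L^q(Ω)} ≤ C ‖g‖_{L^{n/(2s)}(Ω)}`. -/
theorem stmt_11 (n : ℕ) (hn : 1 ≤ n) (s : ℝ) (hs : s ∈ Set.Ioo (0 : ℝ) 1)
    (hns : 2 * s < n) (c₂ : ℝ) (hc₂ : 0 < c₂)
    (V : EuclideanSpace ℝ (Fin n) → ℝ) (hVmeas : Measurable V)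
    (hV0 : ∀ z, 0 ≤ V z)
    (hVbound : ∀ z : EuclideanSpace ℝ (Fin n), z ≠ 0 → V z ≤ c₂ * ‖z‖ ^ (2 * s - n))
    (Ω : Set (EuclideanSpace ℝ (Fin n))) (hΩb : Bornology.IsBounded Ω)
    (hΩm : MeasurableSet Ω) :
    ∀ q : ℝ, 1 ≤ q →
      ∃ C : ℝ, 0 < C ∧ ∀ g : EuclideanSpace ℝ (Fin n) → ℝ,
        (∀ x ∉ Ω, g x = 0) →
        MemLp g (ENNReal.ofReal ((n : ℝ) / (2 * s))) (volume.restrict Ω) →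
        eLpNorm (fun x => ∫ y in Ω, g y * V (x - y)) (ENNReal.ofReal q) (volume.restrict Ω)
          ≤ ENNReal.ofReal C
            * eLpNorm g (ENNReal.ofReal ((n : ℝ) / (2 * s))) (volume.restrict Ω) := by
  intro q hq
  set p := (n : ℝ) / (2 * s)
  set Q := max q p
  set r := (1 - p⁻¹ + Q⁻¹)⁻¹
  have hp : 1 ≤ p := (one_le_div (by linarith [hs.1])).2 hns.le
  have hpQ : p ≤ Q := le_max_right q p
  have hpr : p⁻¹ + r⁻¹ = 1 + Q⁻¹ := by rw [inv_inv]; ring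
  have hr : 0 < r := inv_pos.1 (inv_pos_of_young_exponents hp hpQ hpr)
  have hA : ∫⁻ z in closedBall 0 (diam Ω), ‖V z‖ₑ ^ r ≠ ⊤ := by
    have hexp : -(n * (1 - p⁻¹)) = 2 * s - n := by simp only [p, inv_div]; field_simp; ring
    have hloc := locallyIntegrable_norm_rpow_of_norm_le_rpow (μ := volume) (by simpa using hn)
      hVmeas.aestronglyMeasurable hc₂.le hr.le
      (fun z hz => by rw [hexp, Real.norm_of_nonneg (hV0 z)]; exact hVbound z hz)
      (by simpa using mul_one_sub_inv_mul_lt_of_young_exponents (by linarith [hs.1]) hp hpQ hpr)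
    simp_rw [← ofReal_norm, ENNReal.ofReal_rpow_of_nonneg (norm_nonneg _) hr.le]
    exact (hloc.integrableOn_isCompact (isCompact_closedBall 0 _)).lintegral_lt_top.ne
  set M := (∫⁻ z in closedBall 0 (diam Ω), ‖V z‖ₑ ^ r) ^ r⁻¹ * volume Ω ^ (1 / q - 1 / Q)
  have hM : M ≠ ⊤ := ENNReal.mul_ne_top (ENNReal.rpow_ne_top_of_nonneg (by positivity) hA)
    (ENNReal.rpow_ne_top_of_nonneg (sub_nonneg.2 (one_div_le_one_div_of_le (by linarith)
      (le_max_left q p))) hΩb.measure_lt_top.ne)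
  refine ⟨M.toReal + 1, by positivity, fun g _ hg => ?_⟩
  calc _ ≤ M * eLpNorm g (ENNReal.ofReal p) (volume.restrict Ω) :=
        eLpNorm_setIntegral_mul_sub_le hVmeas hΩb hΩm (by linarith) (le_max_left q p) hp hpQ hpr
          hg.1
    _ ≤ ENNReal.ofReal (M.toReal + 1) * eLpNorm g (ENNReal.ofReal p) (volume.restrict Ω) := by
        gcongr
        exact (ENNReal.le_ofReal_iff_toReal_le hM (by positivity)).2 (by linarith)
end
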